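/- Suppose r + s ≡ 1 (mod 4). Then: (1) if s is even, 𝔎_{r,s} = ℝω ⊕ 𝔎′_{r,s} (an internal direct sum of subspaces); (2) if s is odd, 𝔎_{r,s} = 𝔎′_{r,s}. -/

import Mathlib

/-
Setting (Eberlein, "Isometries of Clifford Algebras II"):
`F` a field with `char F ≠ 2`, `n = r + s > 0`, and `Cl(r,s)` the Clifford algebra of `F^n`
in which `eᵢ·eⱼ = -eⱼ·eᵢ` for `i ≠ j`, `eᵢ² = -1` for the first `r` indices and
`eᵢ² = +1` for the last `s` indices.
-/

open CliffordAlgebra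

namespace CliffPaper

/-- The quadratic form `q(x) = -x₁² - … - x_r² + x_{r+1}² + … + x_n²` on `F^(r+s)`. -/
noncomputable def Qf (F : Type*) [Field F] (r s : ℕ) : QuadraticForm F (Fin (r + s) → F) :=
  QuadraticMap.weightedSumSquares F (fun i : Fin (r + s) => if (i : ℕ) < r then (-1 : F) else 1)

/-- The Clifford algebra `Cl(r,s)`. -/
abbrev Cl (F : Type*) [Field F] (r s : ℕ) : Type _ := CliffordAlgebra (Qf F r s)

/-- The generator `e_i` of `Cl(r,s)` (`i` is a zero-based index, so `e_i² = -1` for `i < r`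
and `e_i² = +1` for `r ≤ i`). -/
noncomputable def gen (F : Type*) [Field F] (r s : ℕ) (i : Fin (r + s)) : Cl F r s :=
  ι (Qf F r s) (Pi.single i 1)

/-- For a multi-index `I = {i₁ < … < i_k}`, the product `e_I = e_{i₁} ⋯ e_{i_k}`. -/
noncomputable def eProd (F : Type*) [Field F] (r s : ℕ) (I : Finset (Fin (r + s))) : Cl F r s :=
  ((I.sort (· ≤ ·)).map (gen F r s)).prod

/-- Clifford conjugation: the unique anti-automorphism `c` of `Cl(r,s)` with `c ∘ c = id` and
`c(v) = -v` for all `v ∈ F^n`; concretely, reversal composed with the grade involution. -/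
noncomputable def conj (F : Type*) [Field F] (r s : ℕ) : Cl F r s →ₗ[F] Cl F r s :=
  (reverse (Q := Qf F r s)).comp (involute (Q := Qf F r s)).toLinearMap

theorem conj_mul (F : Type*) [Field F] (r s : ℕ) (a b : Cl F r s) :
    conj F r s (a * b) = conj F r s b * conj F r s a := by
  simp [conj, reverse.map_mul]

/-- `𝔊_{r,s} = {x ∈ Cl(r,s) : c(x) = -x}`, the `-1`-eigenspace of Clifford conjugation,
as an `F`-subspace of `Cl(r,s)`. -/
noncomputable def Gsub (F : Type*) [Field F] (r s : ℕ) : Submodule F (Cl F r s) :=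
  LinearMap.ker (conj F r s + LinearMap.id)

theorem mem_Gsub {F : Type*} [Field F] {r s : ℕ} (x : Cl F r s) :
    x ∈ Gsub F r s ↔ conj F r s x = -x := by
  simp [Gsub, LinearMap.mem_ker, add_eq_zero_iff_eq_neg]

attribute [local instance] LieRing.ofAssociativeRing

/-- `𝔊_{r,s}` as a Lie subalgebra of `Cl(r,s)` with the commutator bracket
`⁅x,y⁆ = x*y - y*x`. -/
noncomputable def GLie (F : Type*) [Field F] (r s : ℕ) : LieSubalgebra F (Cl F r s) where
  toSubmodule := Gsub F r s
  lie_mem' := by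
    intro x y hx hy
    have hx' : x ∈ Gsub F r s := hx
    have hy' : y ∈ Gsub F r s := hy
    show ⁅x, y⁆ ∈ Gsub F r s
    rw [mem_Gsub] at hx' hy' ⊢
    rw [Ring.lie_def, map_sub, conj_mul, conj_mul, hx', hy']
    noncomm_ring

/-- `𝔎_{r,s}`: the `+1`-eigenspace of `β` restricted to `𝔊_{r,s}`. -/
noncomputable def Ksub (F : Type*) [Field F] (r s : ℕ) (β : Cl F r s ≃ₐ[F] Cl F r s) :
    Submodule F (Cl F r s) :=
  LinearMap.ker (β.toLinearMap - LinearMap.id) ⊓ Gsub F r s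

/-- `𝔓_{r,s}`: the `-1`-eigenspace of `β` restricted to `𝔊_{r,s}`. -/
noncomputable def Psub (F : Type*) [Field F] (r s : ℕ) (β : Cl F r s ≃ₐ[F] Cl F r s) :
    Submodule F (Cl F r s) :=
  LinearMap.ker (β.toLinearMap + LinearMap.id) ⊓ Gsub F r s

/-- The center `𝔷(𝔎_{r,s}) = {x ∈ 𝔎_{r,s} : [x,y] = 0 for all y ∈ 𝔎_{r,s}}`. -/
noncomputable def ZKsub (F : Type*) [Field F] (r s : ℕ) (β : Cl F r s ≃ₐ[F] Cl F r s) :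
    Submodule F (Cl F r s) where
  carrier := {x | x ∈ Ksub F r s β ∧ ∀ y ∈ Ksub F r s β, x * y = y * x}
  zero_mem' := ⟨zero_mem _, fun y _ => by simp⟩
  add_mem' := fun {a b} ha hb => ⟨add_mem ha.1 hb.1, fun y hy => by
    rw [add_mul, mul_add, ha.2 y hy, hb.2 y hy]⟩
  smul_mem' := fun c a ha => ⟨Submodule.smul_mem _ c ha.1, fun y hy => by
    rw [smul_mul_assoc, mul_smul_comm, ha.2 y hy]⟩

/-- `𝔥_{r,s}`: the span of the `e_I` with `|I| ≡ 1, 2 (mod 4)` and `I ≠ {1,…,n}`. -/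
noncomputable def Hsub (F : Type*) [Field F] (r s : ℕ) : Submodule F (Cl F r s) :=
  Submodule.span F {x | ∃ I : Finset (Fin (r + s)), I.Nonempty ∧ I ≠ Finset.univ ∧
    (I.card % 4 = 1 ∨ I.card % 4 = 2) ∧ x = eProd F r s I}

/-- The volume element `ω = e₁e₂⋯e_n`. -/
noncomputable def omegaEl (F : Type*) [Field F] (r s : ℕ) : Cl F r s :=
  eProd F r s Finset.univ

/-!
Both Clifford conjugation and `β` are diagonal in the basis `(e_I)` of `Cl(r,s)`: for `|I| = k`,
`c(e_I) = (-1)^(k(k+1)/2) e_I` (the grade involution contributes `(-1)^k`, reversing `k`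
anticommuting generators `(-1)^(k(k-1)/2)`), and `β(e_I) = (-1)^m e_I` where `m` counts the
indices of `I` beyond `r`. Hence `𝔎_{r,s}` is spanned by the `e_I` with `|I| ≡ 1, 2 (mod 4)` and
`m` even. When `n ≡ 1 (mod 4)`, the only such `I` not already in `𝔥_{r,s}` is `{1,…,n}`, which
qualifies exactly when `s` is even, and `ω = e_{1…n}` is independent of the other `e_I`.

That the `e_I` form a basis comes from the basis of the exterior algebra: the isomorphism
`CliffordAlgebra.equivExterior` sends a product of pairwise orthogonal vectors to their wedge
product.
-/

end CliffPaper

theorem Finset.ofFn_orderEmbOfFin {α : Type*} [LinearOrder α] (s : Finset α) :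
    List.ofFn (s.orderEmbOfFin rfl) = s.sort (· ≤ ·) :=
  List.ext_getElem (by simp) fun i _ _ => by simp [Finset.orderEmbOfFin_apply]

theorem ExteriorAlgebra.basis_eq_prod_sort {R M I : Type*} [CommRing R] [AddCommGroup M]
    [Module R M] [LinearOrder I] (b : Module.Basis I R M) (s : Finset I) :
    b.ExteriorAlgebra s = ((s.sort (· ≤ ·)).map (ExteriorAlgebra.ι R ∘ b)).prod := by
  rw [basis_apply_ofCard b rfl, ιMulti_family, ιMulti_apply, ← s.ofFn_orderEmbOfFin,
    List.map_ofFn]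
  rfl

namespace CliffordAlgebra

variable {R M : Type*} [CommRing R] [AddCommGroup M] [Module R M] {Q : QuadraticForm R M}

theorem contractLeft_prod_map_ι_eq_zero (d : Module.Dual R M) :
    ∀ L : List M, (∀ v ∈ L, d v = 0) → contractLeft d (L.map (ι Q)).prod = 0
  | [], _ => by simp
  | a :: L, h => by
    rw [List.map_cons, List.prod_cons, contractLeft_ι_mul, h a List.mem_cons_self,
      contractLeft_prod_map_ι_eq_zero d L fun v hv => h v (List.mem_cons_of_mem a hv)]
    simp

theorem changeForm_prod_map_ι {Q' : QuadraticForm R M} {B : LinearMap.BilinForm R M}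
    (h : B.toQuadraticMap = Q' - Q) :
    ∀ L : List M, L.Pairwise (fun u v => B u v = 0) →
      changeForm h (L.map (ι Q)).prod = (L.map (ι Q')).prod
  | [], _ => by simp
  | a :: L, hL => by
    rw [List.pairwise_cons] at hL
    simp only [List.map_cons, List.prod_cons]
    rw [changeForm_ι_mul, changeForm_prod_map_ι h L hL.2,
      contractLeft_prod_map_ι_eq_zero _ L hL.1, sub_zero]

theorem equivExterior_prod_map_ι [Invertible (2 : R)] (L : List M)
    (hL : L.Pairwise Q.IsOrtho) :
    equivExterior Q (L.map (ι Q)).prod = (L.map (ExteriorAlgebra.ι R)).prod :=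
  changeForm_prod_map_ι changeForm.associated_neg_proof L <| hL.imp fun h => by
    simpa [QuadraticMap.associated_isOrtho] using h

theorem prod_map_ι_mul_ι_of_isOrtho (a : M) :
    ∀ L : List M, (∀ v ∈ L, Q.IsOrtho v a) →
      (L.map (ι Q)).prod * ι Q a = (-1 : R) ^ L.length • (ι Q a * (L.map (ι Q)).prod)
  | [], _ => by simp
  | v :: L, h => by
    rw [List.map_cons, List.prod_cons, mul_assoc,
      prod_map_ι_mul_ι_of_isOrtho a L fun w hw => h w (List.mem_cons_of_mem v hw),
      mul_smul_comm, ← mul_assoc, ι_mul_ι_comm_of_isOrtho (h v List.mem_cons_self),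
      List.length_cons, pow_succ, mul_comm, mul_smul, neg_one_smul, neg_mul, mul_assoc, smul_neg]

theorem reverse_prod_map_ι_of_pairwise_isOrtho :
    ∀ L : List M, L.Pairwise Q.IsOrtho →
      reverse (L.map (ι Q)).prod = (-1 : R) ^ L.length.choose 2 • (L.map (ι Q)).prod
  | [], _ => by simp
  | a :: L, hL => by
    rw [List.pairwise_cons] at hL
    rw [List.map_cons, List.prod_cons, reverse.map_mul, reverse_ι,
      reverse_prod_map_ι_of_pairwise_isOrtho L hL.2, smul_mul_assoc,
      prod_map_ι_mul_ι_of_isOrtho a L fun v hv => (hL.1 v hv).symm, smul_smul, ← pow_add,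
      List.length_cons, Nat.choose_succ_succ', Nat.choose_one_right, add_comm]

variable {I : Type*} [LinearOrder I]

noncomputable def _root_.Module.Basis.cliffordAlgebra [Invertible (2 : R)]
    (Q : QuadraticForm R M) (b : Module.Basis I R M) :
    Module.Basis (Finset I) R (CliffordAlgebra Q) :=
  b.ExteriorAlgebra.map (equivExterior Q).symm

theorem cliffordAlgebra_apply [Invertible (2 : R)] {b : Module.Basis I R M}
    (hb : Pairwise fun i j => Q.IsOrtho (b i) (b j)) (s : Finset I) :
    b.cliffordAlgebra Q s = ((s.sort (· ≤ ·)).map (ι Q ∘ b)).prod := by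
  have hsort : ((s.sort (· ≤ ·)).map b).Pairwise Q.IsOrtho :=
    List.pairwise_map.2 <| (s.sortedLT_sort).pairwise.imp fun h => hb h.ne
  rw [Module.Basis.cliffordAlgebra, Module.Basis.map_apply, LinearEquiv.symm_apply_eq,
    ← List.map_map, equivExterior_prod_map_ι _ hsort, List.map_map,
    ExteriorAlgebra.basis_eq_prod_sort]

end CliffordAlgebra

theorem Module.Basis.eq_of_repr_ne_zero_of_apply_eq_smul {ι R M : Type*} [CommRing R]
    [IsDomain R] [AddCommGroup M] [Module R M] (b : Module.Basis ι R M) {f : M →ₗ[R] M}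
    {d : ι → R} (hf : ∀ i, f (b i) = d i • b i) {c : R} {x : M} (hx : f x = c • x) {i : ι}
    (hi : b.repr x i ≠ 0) : d i = c := by
  have hcoord : (b.coord i).comp f = d i • b.coord i := b.ext fun j => by
    rcases eq_or_ne j i with rfl | hji
    · simp [hf]
    · simp [hf, hji]
  have hrepr : c * b.repr x i = d i * b.repr x i := by
    simpa [hx] using LinearMap.congr_fun hcoord x
  exact (mul_right_cancel₀ hi hrepr).symm

theorem Nat.odd_choose_two_succ_iff (k : ℕ) :
    Odd ((k + 1).choose 2) ↔ k % 4 = 1 ∨ k % 4 = 2 := by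
  induction k with
  | zero => simp
  | succ k ih =>
    rw [Nat.choose_succ_succ', Nat.choose_one_right, Nat.odd_add', show 1 + 1 = 2 from rfl, ih,
      Nat.even_iff]
    omega

namespace CliffPaper

open Finset

attribute [local instance] LieRing.ofAssociativeRing

variable {F : Type*} [Field F] {r s : ℕ}

theorem Qf_isOrtho_single {i j : Fin (r + s)} (h : i ≠ j) :
    (Qf F r s).IsOrtho (Pi.single i 1) (Pi.single j 1) := by
  rw [QuadraticMap.isOrtho_def, Qf, QuadraticMap.weightedSumSquares_apply,
    QuadraticMap.weightedSumSquares_apply, QuadraticMap.weightedSumSquares_apply,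
    ← Finset.sum_add_distrib]
  refine Finset.sum_congr rfl fun k _ => ?_
  by_cases hki : k = i <;> by_cases hkj : k = j <;> simp_all

theorem pairwise_isOrtho_sort_single (I : Finset (Fin (r + s))) :
    ((I.sort (· ≤ ·)).map (Pi.single · (1 : F))).Pairwise (Qf F r s).IsOrtho :=
  List.pairwise_map.2 <| (I.sortedLT_sort).pairwise.imp fun h => Qf_isOrtho_single h.ne

theorem eProd_eq_prod_map_ι (I : Finset (Fin (r + s))) :
    eProd F r s I = (((I.sort (· ≤ ·)).map (Pi.single · (1 : F))).map (ι (Qf F r s))).prod := by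
  rw [List.map_map]
  rfl

noncomputable def eBasis (F : Type*) [Field F] [Invertible (2 : F)] (r s : ℕ) :
    Module.Basis (Finset (Fin (r + s))) F (Cl F r s) :=
  (Pi.basisFun F (Fin (r + s))).cliffordAlgebra (Qf F r s)

theorem eBasis_apply [Invertible (2 : F)] (I : Finset (Fin (r + s))) :
    eBasis F r s I = eProd F r s I := by
  rw [eBasis, cliffordAlgebra_apply (fun i j h => by simpa using Qf_isOrtho_single h),
    eProd_eq_prod_map_ι, List.map_map]
  simp [Function.comp_def]

theorem conj_eProd (I : Finset (Fin (r + s))) :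
    conj F r s (eProd F r s I) = (-1 : F) ^ (I.card + 1).choose 2 • eProd F r s I := by
  rw [eProd_eq_prod_map_ι, conj, LinearMap.comp_apply, AlgHom.toLinearMap_apply,
    involute_prod_map_ι, map_smul,
    reverse_prod_map_ι_of_pairwise_isOrtho _ (pairwise_isOrtho_sort_single I), smul_smul,
    ← pow_add, List.length_map, Finset.length_sort, Nat.choose_succ_succ', Nat.choose_one_right]

theorem beta_gen (β : Cl F r s ≃ₐ[F] Cl F r s)
    (hβ : ∀ v : Fin (r + s) → F,
      β (ι (Qf F r s) v) = ι (Qf F r s) (fun i => if (i : ℕ) < r then v i else -v i))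
    (i : Fin (r + s)) :
    β (gen F r s i) = (if r ≤ i.val then -1 else 1 : F) • gen F r s i := by
  rw [gen, hβ, ← map_smul]
  congr 1
  ext j
  rcases eq_or_ne j i with rfl | hji
  · by_cases hj : r ≤ j.val <;> simp [hj]
  · simp [hji]

theorem beta_eProd (β : Cl F r s ≃ₐ[F] Cl F r s)
    (hβ : ∀ v : Fin (r + s) → F,
      β (ι (Qf F r s) v) = ι (Qf F r s) (fun i => if (i : ℕ) < r then v i else -v i))
    (I : Finset (Fin (r + s))) :
    β (eProd F r s I) = (-1 : F) ^ #{i ∈ I | r ≤ i.val} • eProd F r s I := by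
  have hlist : ∀ L : List (Fin (r + s)), β (L.map (gen F r s)).prod =
      (L.map fun i => (if r ≤ i.val then -1 else 1 : F)).prod • (L.map (gen F r s)).prod := by
    intro L
    induction L with
    | nil => simp
    | cons a L ih =>
      simp only [List.map_cons, List.prod_cons, map_mul, ih, beta_gen β hβ, smul_mul_smul_comm]
  rw [eProd, hlist, ← Multiset.prod_coe, ← Multiset.map_coe, Finset.sort_eq,
    ← Finset.prod_eq_multiset_prod, Finset.prod_ite, Finset.prod_const, Finset.prod_const_one,
    mul_one]

theorem mem_Ksub {β : Cl F r s ≃ₐ[F] Cl F r s} {x : Cl F r s} :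
    x ∈ Ksub F r s β ↔ β x = x ∧ conj F r s x = -x := by
  rw [Ksub, Submodule.mem_inf, mem_Gsub, LinearMap.mem_ker, LinearMap.sub_apply,
    AlgEquiv.toLinearMap_apply, LinearMap.id_apply, sub_eq_zero]

def KIndex (r s : ℕ) : Set (Finset (Fin (r + s))) :=
  {I | (I.card % 4 = 1 ∨ I.card % 4 = 2) ∧ Even #{i ∈ I | r ≤ i.val}}

theorem Ksub_eq_span [Invertible (2 : F)] (β : Cl F r s ≃ₐ[F] Cl F r s)
    (hβ : ∀ v : Fin (r + s) → F,
      β (ι (Qf F r s) v) = ι (Qf F r s) (fun i => if (i : ℕ) < r then v i else -v i)) :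
    Ksub F r s β = Submodule.span F (eBasis F r s '' KIndex r s) := by
  have hne : (-1 : F) ≠ 1 := fun h => (Invertible.toNeZero (2 : F)).out (by linear_combination -h)
  have hconj (I) :
      conj F r s (eBasis F r s I) = (-1 : F) ^ (I.card + 1).choose 2 • eBasis F r s I := by
    rw [eBasis_apply, conj_eProd]
  have hβI (I) :
      β.toLinearMap (eBasis F r s I) = (-1 : F) ^ #{i ∈ I | r ≤ i.val} • eBasis F r s I := by
    rw [eBasis_apply, AlgEquiv.toLinearMap_apply, beta_eProd β hβ]
  apply le_antisymm
  · intro x hx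
    obtain ⟨hβx, hconjx⟩ := mem_Ksub.1 hx
    refine (eBasis F r s).mem_span_image.2 fun I hI => ?_
    have hxI : (eBasis F r s).repr x I ≠ 0 := Finsupp.mem_support_iff.1 hI
    have hconjx' : conj F r s x = (-1 : F) • x := by rw [hconjx, neg_one_smul]
    have hβx' : β.toLinearMap x = (1 : F) • x := by rw [one_smul]; exact hβx
    exact ⟨(Nat.odd_choose_two_succ_iff _).1 <| (neg_one_pow_eq_neg_one_iff_odd hne).1 <|
        (eBasis F r s).eq_of_repr_ne_zero_of_apply_eq_smul hconj hconjx' hxI,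
      (neg_one_pow_eq_one_iff_even hne).1 <|
        (eBasis F r s).eq_of_repr_ne_zero_of_apply_eq_smul hβI hβx' hxI⟩
  · rw [Submodule.span_le]
    rintro _ ⟨I, ⟨hcard, heven⟩, rfl⟩
    rw [SetLike.mem_coe, mem_Ksub, eBasis_apply, beta_eProd β hβ, heven.neg_one_pow, one_smul,
      conj_eProd, ((Nat.odd_choose_two_succ_iff _).2 hcard).neg_one_pow, neg_one_smul]
    exact ⟨rfl, rfl⟩

theorem card_filter_le_univ : #{i : Fin (r + s) | r ≤ i.val} = s := by
  have h := card_filter_add_card_filter_not (s := univ) (p := fun i : Fin (r + s) => i.val < r)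
  simp only [Fin.card_filter_val_lt, not_lt, card_univ, Fintype.card_fin] at h
  omega

theorem univ_mem_KIndex_iff (hmod : (r + s) % 4 = 1) : univ ∈ KIndex r s ↔ Even s := by
  simp [KIndex, hmod, card_filter_le_univ]

theorem eProd_mem_Hsub {I : Finset (Fin (r + s))} (hI : I ∈ KIndex r s) (hne : I ≠ univ) :
    eProd F r s I ∈ Hsub F r s := by
  refine Submodule.subset_span ⟨I, card_pos.1 ?_, hne, hI.1, rfl⟩
  rcases hI.1 with h | h <;> omega

theorem disjoint_span_omegaEl_Hsub [Invertible (2 : F)] :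
    Disjoint (F ∙ omegaEl F r s) (Hsub F r s) := by
  have hH : Hsub F r s ≤ Submodule.span F (eBasis F r s '' {I | I ≠ univ}) :=
    Submodule.span_mono fun _ ⟨I, _, hne, _, hx⟩ => ⟨I, hne, hx ▸ eBasis_apply I⟩
  rw [omegaEl, ← eBasis_apply, ← Set.image_singleton]
  exact ((eBasis F r s).linearIndependent.disjoint_span_image (by simp)).mono_right hH

theorem statement14_general (r s : ℕ) (hmod : (r + s) % 4 = 1)
    (β : Cl ℝ r s ≃ₐ[ℝ] Cl ℝ r s)
    (hβ : ∀ v : Fin (r + s) → ℝ,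
      β (ι (Qf ℝ r s) v) = ι (Qf ℝ r s) (fun i => if (i : ℕ) < r then v i else -v i)) :
    (Even s →
      Ksub ℝ r s β = (ℝ ∙ omegaEl ℝ r s) ⊔ (Ksub ℝ r s β ⊓ Hsub ℝ r s) ∧
      Disjoint (ℝ ∙ omegaEl ℝ r s) (Ksub ℝ r s β ⊓ Hsub ℝ r s)) ∧
    (Odd s → Ksub ℝ r s β = Ksub ℝ r s β ⊓ Hsub ℝ r s) := by
  have hK := Ksub_eq_span β hβ
  have hKI {I} (hI : I ∈ KIndex r s) : eProd ℝ r s I ∈ Ksub ℝ r s β :=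
    hK ▸ Submodule.subset_span ⟨I, hI, eBasis_apply (F := ℝ) I⟩
  refine ⟨fun hs => ⟨le_antisymm ?_ ?_, disjoint_span_omegaEl_Hsub.mono_right inf_le_right⟩,
    fun hs => (inf_eq_left.2 (hK.le.trans (Submodule.span_le.2 ?_))).symm⟩
  · refine hK.le.trans (Submodule.span_le.2 ?_)
    rintro _ ⟨I, hI, rfl⟩
    rw [SetLike.mem_coe, eBasis_apply]
    by_cases hIu : I = univ
    · exact Submodule.mem_sup_left (hIu ▸ Submodule.mem_span_singleton_self _)
    · exact Submodule.mem_sup_right ⟨hKI hI, eProd_mem_Hsub hI hIu⟩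
  · exact sup_le ((Submodule.span_singleton_le_iff_mem _ _).2
      (hKI ((univ_mem_KIndex_iff hmod).2 hs))) inf_le_left
  · rintro _ ⟨I, hI, rfl⟩
    rw [SetLike.mem_coe, eBasis_apply]
    refine eProd_mem_Hsub hI ?_
    rintro rfl
    exact Nat.not_even_iff_odd.2 hs ((univ_mem_KIndex_iff hmod).1 hI)

/-- if r+s ≡ 1 (mod 4) then (1) s even ⟹ 𝔎 = ℝω ⊕ 𝔎′ (internal direct sum),
(2) s odd ⟹ 𝔎 = 𝔎′, where 𝔎′ = 𝔎 ∩ 𝔥. -/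
theorem statement14 (r s : ℕ) (hn : 0 < r + s) (hmod : (r + s) % 4 = 1)
    (β : Cl ℝ r s ≃ₐ[ℝ] Cl ℝ r s)
    (hβ : ∀ v : Fin (r + s) → ℝ,
      β (ι (Qf ℝ r s) v) = ι (Qf ℝ r s) (fun i => if (i : ℕ) < r then v i else -v i)) :
    (Even s →
      Ksub ℝ r s β = (ℝ ∙ omegaEl ℝ r s) ⊔ (Ksub ℝ r s β ⊓ Hsub ℝ r s) ∧
      Disjoint (ℝ ∙ omegaEl ℝ r s) (Ksub ℝ r s β ⊓ Hsub ℝ r s)) ∧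
    (Odd s → Ksub ℝ r s β = Ksub ℝ r s β ⊓ Hsub ℝ r s) :=
  statement14_general r s hmod β hβ

end CliffPaper
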